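/- arXiv:1210.2004 — 5 statements merged into one kernel-verified Lean document; each statement's English description precedes it below -/
import Mathlib

section
/- For the function Φ(q,p) = q log(q/p) - (q - p) for q,p > 0, with Φ(0,p) = p and Φ(q,0) = +∞ for q > 0: if 0 ≤ q' ≤ q and p' ≥ p > 0, writing q' = q(1-α) and p' = p(1+β) with α, β ≥ 0, then Φ(q',p') - Φ(q,p) ≤ -α Φ(q,p) + (α + β) p ≤ (α + β) p. -/
/-- The Poisson-type rate function Φ(q,p) = q log(q/p) - (q-p), with Φ(0,p) = p. -/
noncomputable def Phi (q p : ℝ) : ℝ := if q = 0 then p else q * Real.log (q / p) - (q - p)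

/-! Scaling `q` by `a` and `p` by `b` gives the exact identity
`Φ(qa, pb) = a Φ(q,p) + (b - a) p + qa log (a/b)`, and the last term is `≤ 0` when `a ≤ b`.
Nonnegativity of `Φ(q,p) = p · klFun (q/p)` then gives the second bound. -/

open Real InformationTheory

-- At `q = 0` the formula already gives `p`, whatever junk value `log (0 / p)` takes.
lemma Phi_eq (q p : ℝ) : Phi q p = q * log (q / p) - (q - p) := by
  unfold Phi
  split_ifs with hq <;> simp [hq]

lemma Phi_eq_mul_klFun (q : ℝ) {p : ℝ} (hp : p ≠ 0) : Phi q p = p * klFun (q / p) := by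
  rw [Phi_eq, klFun_apply]
  field_simp
  ring

lemma Phi_nonneg {q p : ℝ} (hq : 0 ≤ q) (hp : 0 < p) : 0 ≤ Phi q p := by
  rw [Phi_eq_mul_klFun q hp.ne']
  exact mul_nonneg hp.le (klFun_nonneg (div_nonneg hq hp.le))

lemma Phi_mul_mul (q a : ℝ) {p b : ℝ} (hp : p ≠ 0) (hb : b ≠ 0) :
    Phi (q * a) (p * b) = a * Phi q p + (b - a) * p + q * a * log (a / b) := by
  rw [Phi_eq, Phi_eq]
  by_cases hqa : q * a = 0
  · simp only [hqa, zero_mul, zero_sub, add_zero]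
    linear_combination (-log (q / p) + 1) * hqa
  · obtain ⟨hq, ha⟩ := mul_ne_zero_iff.mp hqa
    rw [show q * a / (p * b) = q / p * (a / b) by field_simp,
      log_mul (div_ne_zero hq hp) (div_ne_zero ha hb)]
    ring

lemma Phi_mul_mul_le {q a p b : ℝ} (hq : 0 ≤ q) (hqa : 0 ≤ q * a) (hp : 0 < p) (hb : 0 < b)
    (hab : a ≤ b) : Phi (q * a) (p * b) ≤ a * Phi q p + (b - a) * p := by
  suffices q * a * log (a / b) ≤ 0 by
    rw [Phi_mul_mul q a hp.ne' hb.ne']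
    linarith
  rcases hq.eq_or_lt with rfl | hq
  · simp
  have ha : 0 ≤ a := nonneg_of_mul_nonneg_right hqa hq
  exact mul_nonpos_of_nonneg_of_nonpos hqa
    (log_nonpos (div_nonneg ha hb.le) ((div_le_one hb).mpr hab))

theorem stmt0_general (q q' p p' α β : ℝ) (hq' : 0 ≤ q') (hqq : q' ≤ q)
    (hp : 0 < p) (hα : 0 ≤ α) (hβ : 0 ≤ β)
    (hq'eq : q' = q * (1 - α)) (hp'eq : p' = p * (1 + β)) :
    Phi q' p' - Phi q p ≤ -α * Phi q p + (α + β) * p ∧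
      -α * Phi q p + (α + β) * p ≤ (α + β) * p := by
  subst hq'eq hp'eq
  have hq : 0 ≤ q := hq'.trans hqq
  constructor
  · have := Phi_mul_mul_le hq hq' hp (by linarith) (by linarith : 1 - α ≤ 1 + β)
    linarith
  · linarith [mul_nonneg hα (Phi_nonneg hq hp)]

theorem stmt0 (q q' p p' α β : ℝ) (hq' : 0 ≤ q') (hqq : q' ≤ q)
    (hp : 0 < p) (hpp : p ≤ p') (hα : 0 ≤ α) (hβ : 0 ≤ β)
    (hq'eq : q' = q * (1 - α)) (hp'eq : p' = p * (1 + β)) :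
    Phi q' p' - Phi q p ≤ -α * Phi q p + (α + β) * p ∧
      -α * Phi q p + (α + β) * p ≤ (α + β) * p :=
  stmt0_general q q' p p' α β hq' hqq hp hα hβ hq'eq hp'eq
end

section
/- Let π be a probability measure on a countable set V with π(x) > 0 for all x. Then there exists a decreasing function ψ : (0,1) → (0,∞) with lim_{s↓0} ψ(s) = +∞ and Σ_{x∈V} π(x) ψ(π(x)) < +∞. -/
/-!
Take `ψ t = (π {π ≤ t} + t)^(-1/2)`; dominated convergence gives `π {π ≤ t} → 0` as `t ↓ 0`,
so `ψ → ∞`. For summability, order `V` so that `π` is monotone (breaking ties by an enumeration)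
and let `M x`, `M⁻ x` be the masses of `{z ≤ x}` and `{z < x}`. Then `π x = M x - M⁻ x` and
`M x ≤ π {π ≤ π x}`, so `π x ψ(π x) ≤ (M x - M⁻ x) / √(M x) ≤ 2 (√(M x) - √(M⁻ x))`. The intervals
`(M⁻ x, M x]` are disjoint subintervals of `[0, 1]`, so these increments of `√` sum to at most `1`.
-/

open Filter Topology Set

noncomputable def mass {ι : Type*} (w : ι → ℝ) (s : Set ι) : ℝ := ∑' z, s.indicator w z

section Mass

variable {ι : Type*} {w : ι → ℝ}

lemma mass_nonneg (hw : 0 ≤ w) (s : Set ι) : 0 ≤ mass w s :=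
  tsum_nonneg (indicator_nonneg fun z _ => hw z)

lemma mass_mono (hw : 0 ≤ w) (hs : Summable w) {s t : Set ι} (hst : s ⊆ t) :
    mass w s ≤ mass w t :=
  (hs.indicator s).tsum_le_tsum (indicator_le_indicator_of_subset hst hw) (hs.indicator t)

lemma mass_le_tsum (hw : 0 ≤ w) (hs : Summable w) (s : Set ι) : mass w s ≤ ∑' z, w z := by
  simpa [mass] using mass_mono hw hs (subset_univ s)

lemma mass_insert (hs : Summable w) {a : ι} {s : Set ι} (ha : a ∉ s) :
    mass w (insert a s) = w a + mass w s := by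
  classical
  have hsplit :
      (insert a s).indicator w = fun z => (if z = a then w a else 0) + s.indicator w z := by
    ext z
    by_cases hz : z = a
    · subst hz; simp [ha]
    · simp [hz, indicator_apply]
  rw [mass, hsplit, Summable.tsum_add, tsum_ite_eq, mass]
  · exact summable_of_ne_finset_zero (s := {a}) fun z hz => by simp_all
  · exact hs.indicator s

lemma tendsto_mass_preimage_Iic (hw : ∀ x, 0 < w x) (hs : Summable w) :
    Tendsto (fun t => mass w (w ⁻¹' Iic t)) (𝓝[>] 0) (𝓝 0) := by
  have := tendsto_tsum_of_dominated_convergence (𝓕 := 𝓝[>] (0 : ℝ))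
    (f := fun t => (w ⁻¹' Iic t).indicator w) (g := fun _ => (0 : ℝ)) hs ?_ ?_
  · simpa [mass] using this
  · intro z
    refine tendsto_const_nhds.congr' ?_
    filter_upwards [Ioo_mem_nhdsGT (hw z)] with t ht
    simp [indicator_of_notMem (show z ∉ w ⁻¹' Iic t from not_le.mpr ht.2)]
  · filter_upwards with t z
    by_cases hz : z ∈ w ⁻¹' Iic t <;> simp [hz, abs_of_pos (hw z), (hw z).le]

end Mass

lemma sub_div_sqrt_le_two_mul_sqrt_sub {r h g : ℝ} (hr : 0 ≤ r) (hrh : r ≤ h) (hhg : h ≤ g) :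
    (h - r) / √g ≤ 2 * (√h - √r) := by
  have hsqrt_le : √r ≤ √h := Real.sqrt_le_sqrt hrh
  rcases (Real.sqrt_nonneg g).eq_or_lt with hg | hg
  · rw [← hg, div_zero]
    linarith
  have hfactor : h - r = (√h - √r) * (√h + √r) := by
    linear_combination (Real.mul_self_sqrt (hr.trans hrh)).symm - (Real.mul_self_sqrt hr).symm
  rw [div_le_iff₀ hg, hfactor]
  calc (√h - √r) * (√h + √r) ≤ (√h - √r) * (2 * √g) := by
        gcongr
        linarith [Real.sqrt_le_sqrt hhg, Real.sqrt_le_sqrt (hrh.trans hhg)]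
    _ = 2 * (√h - √r) * √g := by ring

section LinearOrder

variable {ι : Type*} [LinearOrder ι] {w : ι → ℝ}

lemma mass_Iic_eq_add_mass_Iio (hs : Summable w) (x : ι) :
    mass w (Iic x) = w x + mass w (Iio x) := by
  rw [show Iic x = insert x (Iio x) from Iio_insert.symm, mass_insert hs self_notMem_Iio]

lemma sum_sqrt_mass_Iic_sub_le (hw : 0 ≤ w) (hs : Summable w) (F : Finset ι) :
    ∑ x ∈ F, (√(mass w (Iic x)) - √(mass w (Iio x))) ≤ √(∑' z, w z) := by
  classical
  suffices ∑ x ∈ F, (√(mass w (Iic x)) - √(mass w (Iio x))) ≤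
      √(mass w {z | ∃ x ∈ F, z ≤ x}) from
    this.trans (Real.sqrt_le_sqrt (mass_le_tsum hw hs _))
  induction F using Finset.induction_on_max with
  | empty => simp
  | insert a F hlt ih =>
    have haF : a ∉ F := fun ha => lt_irrefl a (hlt a ha)
    have hF : ∑ x ∈ F, (√(mass w (Iic x)) - √(mass w (Iio x))) ≤ √(mass w (Iio a)) :=
      ih.trans (Real.sqrt_le_sqrt (mass_mono hw hs fun _ ⟨x, hx, hzx⟩ => hzx.trans_lt (hlt x hx)))
    have ha : mass w (Iic a) ≤ mass w {z | ∃ x ∈ insert a F, z ≤ x} :=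
      mass_mono hw hs fun z hz => ⟨a, Finset.mem_insert_self a F, hz⟩
    rw [Finset.sum_insert haF]
    linarith [Real.sqrt_le_sqrt ha]

lemma summable_sqrt_mass_Iic_sub (hw : 0 ≤ w) (hs : Summable w) :
    Summable fun x => √(mass w (Iic x)) - √(mass w (Iio x)) :=
  summable_of_sum_le
    (fun _ => sub_nonneg.mpr (Real.sqrt_le_sqrt (mass_mono hw hs Iio_subset_Iic_self)))
    (sum_sqrt_mass_Iic_sub_le hw hs)

end LinearOrder

noncomputable def invSqrtLowerMass {ι : Type*} (w : ι → ℝ) (t : ℝ) : ℝ :=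
  (√(mass w (w ⁻¹' Iic t) + t))⁻¹

section InvSqrtLowerMass

variable {ι : Type*} {w : ι → ℝ}

lemma invSqrtLowerMass_pos (hw : 0 ≤ w) {t : ℝ} (ht : 0 < t) : 0 < invSqrtLowerMass w t :=
  inv_pos.mpr (Real.sqrt_pos.mpr (add_pos_of_nonneg_of_pos (mass_nonneg hw _) ht))

lemma antitoneOn_invSqrtLowerMass (hw : 0 ≤ w) (hs : Summable w) :
    AntitoneOn (invSqrtLowerMass w) (Ioi 0) := fun _ hs0 _ _ hst =>
  inv_anti₀ (Real.sqrt_pos.mpr (add_pos_of_nonneg_of_pos (mass_nonneg hw _) hs0))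
    (Real.sqrt_le_sqrt (add_le_add (mass_mono hw hs fun _ hz => le_trans hz hst) hst))

lemma tendsto_invSqrtLowerMass (hw : ∀ x, 0 < w x) (hs : Summable w) :
    Tendsto (invSqrtLowerMass w) (𝓝[>] 0) atTop := by
  have hmass : Tendsto (fun t => mass w (w ⁻¹' Iic t) + t) (𝓝[>] 0) (𝓝 0) := by
    simpa using (tendsto_mass_preimage_Iic hw hs).add (tendsto_id.mono_left nhdsWithin_le_nhds)
  have hsqrt : Tendsto (fun t => √(mass w (w ⁻¹' Iic t) + t)) (𝓝[>] 0) (𝓝[>] 0) := by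
    refine tendsto_nhdsWithin_iff.mpr ⟨by
      simpa [Function.comp_def] using (Real.continuous_sqrt.tendsto 0).comp hmass, ?_⟩
    filter_upwards [self_mem_nhdsWithin] with t ht
    exact Real.sqrt_pos.mpr (add_pos_of_nonneg_of_pos (mass_nonneg (fun x => (hw x).le) _) ht)
  exact hsqrt.inv_tendsto_nhdsGT_zero

lemma summable_mul_invSqrtLowerMass_of_monotone [LinearOrder ι] (hw : 0 ≤ w) (hs : Summable w)
    (hmono : Monotone w) : Summable fun x => w x * invSqrtLowerMass w (w x) := by
  refine .of_nonneg_of_le (fun x => mul_nonneg (hw x) (inv_nonneg.mpr (Real.sqrt_nonneg _)))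
    (fun x => ?_) ((summable_sqrt_mass_Iic_sub hw hs).mul_left 2)
  have hIic : mass w (Iic x) ≤ mass w (w ⁻¹' Iic (w x)) + w x :=
    le_add_of_le_of_nonneg (mass_mono hw hs fun _ hz => hmono hz) (hw x)
  calc w x * invSqrtLowerMass w (w x)
        = (mass w (Iic x) - mass w (Iio x)) / √(mass w (w ⁻¹' Iic (w x)) + w x) := by
        rw [mass_Iic_eq_add_mass_Iio hs, add_sub_cancel_right, invSqrtLowerMass, div_eq_mul_inv]
    _ ≤ 2 * (√(mass w (Iic x)) - √(mass w (Iio x))) :=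
        sub_div_sqrt_le_two_mul_sqrt_sub (mass_nonneg hw _)
          (mass_mono hw hs Iio_subset_Iic_self) hIic

lemma summable_mul_invSqrtLowerMass [Countable ι] (hw : 0 ≤ w) (hs : Summable w) :
    Summable fun x => w x * invSqrtLowerMass w (w x) := by
  obtain ⟨e, he⟩ := Countable.exists_injective_nat ι
  let _ : LinearOrder ι := LinearOrder.lift' (fun x => toLex (w x, e x)) fun x y hxy =>
    he (Prod.ext_iff.mp (toLex.injective hxy)).2
  refine summable_mul_invSqrtLowerMass_of_monotone hw hs fun x y hxy => ?_
  rcases Prod.Lex.le_iff.mp hxy with hlt | ⟨heq, _⟩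
  exacts [hlt.le, heq.le]

end InvSqrtLowerMass

theorem stmt4 {V : Type*} [Countable V] (π : V → ℝ)
    (hpos : ∀ x, 0 < π x) (hsum : HasSum π 1) :
    ∃ ψ : ℝ → ℝ,
      (∀ s ∈ Set.Ioo (0:ℝ) 1, 0 < ψ s) ∧
      AntitoneOn ψ (Set.Ioo (0:ℝ) 1) ∧
      Filter.Tendsto ψ (nhdsWithin 0 (Set.Ioi 0)) Filter.atTop ∧
      Summable (fun x => π x * ψ (π x)) := by
  have hnonneg : 0 ≤ π := fun x => (hpos x).le
  exact ⟨invSqrtLowerMass π, fun s hs => invSqrtLowerMass_pos hnonneg hs.1,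
    (antitoneOn_invSqrtLowerMass hnonneg hsum.summable).mono Ioo_subset_Ioi_self,
    tendsto_invSqrtLowerMass hpos hsum.summable,
    summable_mul_invSqrtLowerMass hnonneg hsum.summable⟩
end

section
/- Let (V,E) be a countable oriented graph and Q ∈ ℓ¹₊(E) a summable nonnegative flow with Q(y,z) > 0 for every (y,z) ∈ E and zero divergence, i.e. for every vertex y, Σ_{z:(y,z)∈E} Q(y,z) = Σ_{z:(z,y)∈E} Q(z,y). Then the oriented graph (V,E) is strongly connected (every vertex reachable from every other by directed paths) if and only if its underlying unoriented graph is connected. -/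
/-!
Summing the zero-divergence condition over a set `S` of vertices shows that the flux of `Q` out
of `S` equals the flux into `S`. If no edge leaves `S`, the flux into `S` therefore vanishes, and
since `Q` is positive on edges no edge enters `S` either. Taking for `S` the set of vertices
reachable from `z`, every edge `y → z` can be reversed by a directed path, so undirected
connectivity already gives directed connectivity.
-/

open Function Set

theorem tsum_indicator_prod_univ_eq_tsum_indicator_univ_prod {α V : Type*} [AddCommGroup α]
    [UniformSpace α] [IsUniformAddGroup α] [CompleteSpace α] [T0Space α] {Q : V → V → α}
    (hsum : Summable (uncurry Q)) (hdiv : ∀ y, ∑' z, Q y z = ∑' z, Q z y) (S : Set V) :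
    ∑' p, (S ×ˢ univ).indicator (uncurry Q) p = ∑' p, (univ ×ˢ S).indicator (uncurry Q) p := by
  calc ∑' p, (S ×ˢ univ).indicator (uncurry Q) p
      = ∑' a, S.indicator (fun a => ∑' b, Q a b) a := by
        rw [(hsum.indicator _).tsum_prod]
        refine tsum_congr fun a => ?_
        by_cases ha : a ∈ S <;> simp [ha]
    _ = ∑' a, S.indicator (fun a => ∑' b, Q b a) a := by simp_rw [hdiv]
    _ = ∑' a, ∑' b, (univ ×ˢ S).indicator (uncurry Q) (b, a) := by
        refine tsum_congr fun a => ?_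
        by_cases ha : a ∈ S <;> simp [ha]
    _ = ∑' p, (univ ×ˢ S).indicator (uncurry Q) p := by
        rw [(hsum.indicator _).tsum_prod]
        exact (hsum.indicator _).tsum_comm
          (f := fun b a => (univ ×ˢ S).indicator (uncurry Q) (b, a))

theorem eq_zero_of_notMem_of_mem_of_closed {V : Type*} {Q : V → V → ℝ}
    (hQ : ∀ a b, 0 ≤ Q a b) (hsum : Summable (uncurry Q)) (hdiv : ∀ y, ∑' z, Q y z = ∑' z, Q z y)
    {S : Set V} (hS : ∀ a b, a ∈ S → Q a b ≠ 0 → b ∈ S) {y z : V} (hy : y ∉ S) (hz : z ∈ S) :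
    Q y z = 0 := by
  by_contra hyz
  have hle : (S ×ˢ univ).indicator (uncurry Q) ≤ (univ ×ˢ S).indicator (uncurry Q) := by
    have hQ' : ∀ p : V × V, 0 ≤ uncurry Q p := fun p => hQ p.1 p.2
    rintro ⟨a, b⟩
    by_cases hb : b ∈ S
    · rw [indicator_of_mem (s := univ ×ˢ S) (by simpa using hb)]
      exact indicator_le_self' (fun p _ => hQ' p) _
    · have hab : (S ×ˢ univ).indicator (uncurry Q) (a, b) = 0 :=
        indicator_apply_eq_zero.2 fun ha => not_not.1 (mt (hS a b (mem_prod.1 ha).1) hb)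
      rw [hab]
      exact indicator_nonneg (fun p _ => hQ' p) _
  have hlt :
      (S ×ˢ univ).indicator (uncurry Q) (y, z) < (univ ×ˢ S).indicator (uncurry Q) (y, z) := by
    simpa [hy, hz] using (hQ y z).lt_of_ne' hyz
  exact (Summable.tsum_lt_tsum hle hlt (hsum.indicator _) (hsum.indicator _)).ne
    (tsum_indicator_prod_univ_eq_tsum_indicator_univ_prod hsum hdiv S)

theorem reflTransGen_symm_of_zero_divergence {V : Type*} {E : V → V → Prop} {Q : V → V → ℝ}
    (hpos : ∀ y z, E y z → 0 < Q y z) (hzero : ∀ y z, ¬ E y z → Q y z = 0)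
    (hsum : Summable (uncurry Q)) (hdiv : ∀ y, ∑' z, Q y z = ∑' z, Q z y) {y z : V}
    (hyz : E y z) : Relation.ReflTransGen E z y := by
  have hQ : ∀ a b, 0 ≤ Q a b := fun a b =>
    (em (E a b)).elim (fun h => (hpos a b h).le) fun h => (hzero a b h).ge
  by_contra hzy
  refine (hpos y z hyz).ne' (eq_zero_of_notMem_of_mem_of_closed hQ hsum hdiv
    (S := {w | Relation.ReflTransGen E z w}) ?_ hzy Relation.ReflTransGen.refl)
  exact fun a b ha hab => ha.tail (not_not.1 (mt (hzero a b) hab))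

theorem stmt5_general {V : Type*} (E : V → V → Prop)
    (Q : V → V → ℝ)
    (hpos : ∀ y z, E y z → 0 < Q y z)
    (hzero : ∀ y z, ¬ E y z → Q y z = 0)
    (hsum : Summable (fun p : V × V => Q p.1 p.2))
    (hdiv : ∀ y, ∑' z, Q y z = ∑' z, Q z y) :
    (∀ y z : V, Relation.ReflTransGen E y z) ↔
      (∀ y z : V, Relation.ReflTransGen (fun a b => E a b ∨ E b a) y z) := by
  refine ⟨fun h y z => Relation.ReflTransGen.mono (fun _ _ => Or.inl) _ _ (h y z),
    fun h y z => Relation.reflTransGen_closed ?_ _ _ (h y z)⟩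
  rintro a b (hab | hba)
  · exact .single hab
  · exact reflTransGen_symm_of_zero_divergence hpos hzero hsum hdiv hba

theorem stmt5 {V : Type*} [Countable V] (E : V → V → Prop)
    (hloop : ∀ y, ¬ E y y)
    (Q : V → V → ℝ)
    (hpos : ∀ y z, E y z → 0 < Q y z)
    (hzero : ∀ y z, ¬ E y z → Q y z = 0)
    (hsum : Summable (fun p : V × V => Q p.1 p.2))
    (hdiv : ∀ y, ∑' z, Q y z = ∑' z, Q z y) :
    (∀ y z : V, Relation.ReflTransGen E y z) ↔
      (∀ y z : V, Relation.ReflTransGen (fun a b => E a b ∨ E b a) y z) :=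
  stmt5_general E Q hpos hzero hsum hdiv
end

section
/- Let Q ∈ ℝ₊^E be a nonnegative flow on a countable oriented graph with zero divergence and zero flux towards infinity (there is an invading sequence V_n ↗ V of finite vertex sets with Σ_{y∈V_n, z∉V_n} Q(y,z) → 0). Then Q admits a cyclic decomposition: there exist nonnegative constants Q̂(C) indexed by the countable set 𝒞 of self-avoiding finite directed cycles in (V,E) such that Q(y,z) = Σ_{C∈𝒞 : (y,z)∈C} Q̂(C) for every (y,z) ∈ E. -/
/-- A self-avoiding finite directed cycle in the oriented graph with edge relation `E`:
a nonempty list of pairwise distinct vertices whose consecutive pairs (cyclically)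
are edges of the graph. -/
def IsSACycle {V : Type*} (E : V → V → Prop) (l : List V) : Prop :=
  l ≠ [] ∧ l.Nodup ∧ ∀ p ∈ l.zip (l.rotate 1), E p.1 p.2

/-!
We work in `ℝ≥0∞`. By Zorn's lemma there is a maximal family of cycle weights whose
superposition stays below `Q`. The residual `R = Q - (superposition)` is again divergence free
and has zero flux towards infinity. If `R a b > 0`, then `b` reaches `a` along `R`-positive
edges: otherwise the finite part `A` of the set reachable from `b` receives at least `R a b`
through the edge `(a, b)`, so by conservation it sends out as much; but `R` vanishes on edges
leaving the reachable set, so this outflow crosses the boundary of `Vn n ⊇ A`, whose flux tends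
to `0`. The cycle closed by `(a, b)` can then be added to the family with weight the minimum
of `R` along it, contradicting maximality.
-/

open List Filter Topology
open scoped ENNReal

def cycleEdges {V : Type*} (l : List V) : List (V × V) := l.zip (l.rotate 1)

namespace List

variable {α β : Type*}

theorem tsum_ite_mem_of_nodup_map_fst [DecidableEq α] [DecidableEq β] {p : List (α × β)}
    (hp : (p.map Prod.fst).Nodup) (y : α) (a : ℝ≥0∞) :
    ∑' z, (if (y, z) ∈ p then a else 0) = if y ∈ p.map Prod.fst then a else 0 := by
  split_ifs with hy
  · obtain ⟨⟨_, z₀⟩, hz₀, rfl⟩ := mem_map.1 hy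
    rw [tsum_eq_single z₀ fun z hz => if_neg fun hyz => hz ?_, if_pos hz₀]
    simpa using inj_on_of_nodup_map hp hyz hz₀ rfl
  · exact ENNReal.tsum_eq_zero.2 fun z => if_neg fun hyz => hy (mem_map_of_mem (f := Prod.fst) hyz)

theorem exists_nodup_isChain_of_reflTransGen {r : α → α → Prop} {a b : α}
    (h : Relation.ReflTransGen r b a) :
    ∃ q : List α, q.Nodup ∧ q.IsChain r ∧ q.head? = some b ∧ q.getLast? = some a := by
  induction h using Relation.ReflTransGen.head_induction_on with
  | refl => exact ⟨[a], by simp⟩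
  | @head c d hcd _ ih =>
    obtain ⟨q, hnd, hch, hhd, hlast⟩ := ih
    have hq : q ≠ [] := by rintro rfl; simp at hhd
    by_cases hc : c ∈ q
    · obtain ⟨s, t, rfl⟩ := append_of_mem hc
      refine ⟨c :: t, hnd.sublist (sublist_append_right _ _), hch.right_of_append, rfl, ?_⟩
      rwa [getLast?_append_of_ne_nil _ (cons_ne_nil _ _)] at hlast
    · refine ⟨c :: q, nodup_cons.2 ⟨hc, hnd⟩, hch.cons fun y hy => ?_, rfl, ?_⟩
      · exact Option.some_inj.1 (hhd.symm.trans hy) ▸ hcd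
      · rwa [getLast?_cons_of_ne_nil hq]

end List

section Cycles

variable {α : Type*}

theorem map_fst_cycleEdges (l : List α) : (cycleEdges l).map Prod.fst = l :=
  map_fst_zip (by simp)

theorem map_snd_cycleEdges (l : List α) : (cycleEdges l).map Prod.snd = l.rotate 1 :=
  map_snd_zip (by simp)

theorem tsum_ite_mem_cycleEdges_left [DecidableEq α] {l : List α} (hl : l.Nodup) (y : α)
    (a : ℝ≥0∞) : ∑' z, (if (y, z) ∈ cycleEdges l then a else 0) = if y ∈ l then a else 0 := by
  rw [tsum_ite_mem_of_nodup_map_fst] <;> rw [map_fst_cycleEdges]; exact hl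

theorem tsum_ite_mem_cycleEdges_right [DecidableEq α] {l : List α} (hl : l.Nodup) (y : α)
    (a : ℝ≥0∞) : ∑' x, (if (x, y) ∈ cycleEdges l then a else 0) = if y ∈ l then a else 0 := by
  have hswap : ∀ x, (x, y) ∈ cycleEdges l ↔ (y, x) ∈ (cycleEdges l).map Prod.swap := by simp
  have hfst : ((cycleEdges l).map Prod.swap).map Prod.fst = l.rotate 1 := by
    rw [List.map_map, ← map_snd_cycleEdges]; rfl
  simp_rw [hswap]
  rw [tsum_ite_mem_of_nodup_map_fst, hfst]
  · exact if_congr mem_rotate rfl rfl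
  · rw [hfst]; exact nodup_rotate.2 hl

theorem IsSACycle.mono {E E' : α → α → Prop} {l : List α} (h : IsSACycle E l)
    (hE : ∀ u v, E u v → E' u v) : IsSACycle E' l :=
  ⟨h.1, h.2.1, fun p hp => hE _ _ (h.2.2 p hp)⟩

theorem exists_isSACycle_of_reflTransGen {r : α → α → Prop} {a b : α} (hab : r a b)
    (h : Relation.ReflTransGen r b a) : ∃ l, IsSACycle r l ∧ (a, b) ∈ cycleEdges l := by
  obtain ⟨q, hnd, hch, hhd, hlast⟩ := exists_nodup_isChain_of_reflTransGen h
  obtain ⟨t, rfl⟩ : ∃ t, q = b :: t := by cases q <;> simp_all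
  have hrot : (b :: t).rotate 1 = t ++ [b] := by simp [rotate_cons_succ]
  refine ⟨b :: t, ⟨cons_ne_nil _ _, hnd, fun p hp => ?_⟩, ?_⟩
  · have hcyc : (b :: t ++ [b]).IsChain r :=
      hch.append (isChain_singleton b) (by simpa [hlast] using hab)
    rw [hrot] at hp
    exact forall₂_zip (isChain_cons_append_singleton_iff_forall₂.1 hcyc) hp
  · obtain ⟨s, hs⟩ : ∃ s, b :: t = s ++ [a] := ⟨_, (dropLast_append_getLast? _ hlast).symm⟩
    have hlen : s.length = t.length := by simpa using congrArg length hs.symm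
    rw [cycleEdges, hrot, hs, zip_append hlen]
    simp

end Cycles

theorem ENNReal.tsum_iSup_of_directed {ι α : Type*} {f : ι → α → ℝ≥0∞}
    (hf : Directed (· ≤ ·) f) : ∑' a, ⨆ i, f i a = ⨆ i, ∑' a, f i a := by
  simp_rw [ENNReal.tsum_eq_iSup_sum]
  rw [iSup_comm]
  refine iSup_congr fun s => ENNReal.finsetSum_iSup fun i j => ?_
  obtain ⟨k, hik, hjk⟩ := hf i j
  exact ⟨k, fun a => ⟨hik a, hjk a⟩⟩

theorem ENNReal.tsum_sub_of_le {α : Type*} {f g : α → ℝ≥0∞} (hgf : g ≤ f) (hg : ∑' a, g a ≠ ∞) :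
    ∑' a, (f a - g a) = ∑' a, f a - ∑' a, g a :=
  ENNReal.eq_sub_of_add_eq hg <| by
    rw [← ENNReal.tsum_add]; exact tsum_congr fun a => tsub_add_cancel_of_le (hgf a)

theorem ENNReal.tsum_eq_sum_add_tsum_ite {α : Type*} [DecidableEq α] (f : α → ℝ≥0∞)
    (A : Finset α) : ∑' z, f z = ∑ z ∈ A, f z + ∑' z, if z ∈ A then 0 else f z := by
  rw [← ENNReal.sum_add_tsum_compl A f, tsum_subtype]
  refine congrArg _ (tsum_congr fun z => ?_)
  by_cases hz : z ∈ A <;> simp [hz]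

theorem ENNReal.hasSum_toReal_of_tsum_eq_ofReal {α : Type*} {f : α → ℝ≥0∞} {x : ℝ} (hx : 0 ≤ x)
    (h : ∑' a, f a = ENNReal.ofReal x) : HasSum (fun a => (f a).toReal) x := by
  have hfin : ∑' a, f a ≠ ∞ := h ▸ ENNReal.ofReal_ne_top
  convert ENNReal.hasSum_toReal hfin
  rw [← ENNReal.tsum_toReal_eq (ENNReal.ne_top_of_tsum_ne_top hfin), h, ENNReal.toReal_ofReal hx]

section Flows

variable {V : Type*}

def IsBalanced (P : V → V → ℝ≥0∞) : Prop :=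
  ∀ y, ∑' z, P y z = ∑' z, P z y

theorem IsBalanced.tsub {P Q : V → V → ℝ≥0∞} (hQ : IsBalanced Q) (hP : IsBalanced P)
    (hPQ : P ≤ Q) (hrow : ∀ y, ∑' z, Q y z ≠ ∞) : IsBalanced (Q - P) := fun y => by
  have hProw : ∑' z, P y z ≠ ∞ := ne_top_of_le_ne_top (hrow y) (ENNReal.tsum_le_tsum (hPQ y))
  simp only [Pi.sub_apply]
  rw [ENNReal.tsum_sub_of_le (hPQ y) hProw,
    ENNReal.tsum_sub_of_le (fun z => hPQ z y) (hP y ▸ hProw), hQ, hP]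

variable [DecidableEq V]

noncomputable def outflow (P : V → V → ℝ≥0∞) (A : Finset V) : ℝ≥0∞ :=
  ∑ y ∈ A, ∑' z, if z ∈ A then 0 else P y z

def HasZeroFluxAtInfinity (P : V → V → ℝ≥0∞) : Prop :=
  ∃ Vn : ℕ → Finset V, Monotone Vn ∧ (∀ x, ∃ n, x ∈ Vn n) ∧
    Tendsto (fun n => outflow P (Vn n)) atTop (𝓝 0)

theorem IsBalanced.outflow_eq_outflow_swap {P : V → V → ℝ≥0∞} (hbal : IsBalanced P)
    (hP : ∀ u v, P u v ≠ ∞) (A : Finset V) : outflow P A = outflow (Function.swap P) A := by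
  have h : ∑ y ∈ A, ∑' z, P y z = ∑ y ∈ A, ∑' z, P z y := Finset.sum_congr rfl fun y _ => hbal y
  rw [Finset.sum_congr rfl fun y _ => ENNReal.tsum_eq_sum_add_tsum_ite (P y) A,
    Finset.sum_congr rfl fun y _ => ENNReal.tsum_eq_sum_add_tsum_ite (fun z => P z y) A,
    Finset.sum_add_distrib, Finset.sum_add_distrib, Finset.sum_comm (f := fun y z => P z y)] at h
  refine (ENNReal.add_right_inj ?_).1 h
  exact ENNReal.sum_ne_top.2 fun y _ => ENNReal.sum_ne_top.2 fun z _ => hP y z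

theorem IsBalanced.le_outflow_of_not_reflTransGen {P Q : V → V → ℝ≥0∞} (hbal : IsBalanced P)
    (hP : ∀ u v, P u v ≠ ∞) (hPQ : P ≤ Q) {B : Finset V} {a b : V} (hb : b ∈ B)
    (hab : ¬ Relation.ReflTransGen (fun u v => P u v ≠ 0) b a) : P a b ≤ outflow Q B := by
  classical
  set A := B.filter (Relation.ReflTransGen (fun u v => P u v ≠ 0) b)
  have haA : a ∉ A := fun ha => hab (Finset.mem_filter.1 ha).2
  have hbA : b ∈ A := Finset.mem_filter.2 ⟨hb, .refl⟩
  calc P a b ≤ ∑' z, if z ∈ A then 0 else P z b := by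
        simpa [haA] using ENNReal.le_tsum (f := fun z => if z ∈ A then 0 else P z b) a
    _ ≤ outflow (Function.swap P) A :=
        Finset.single_le_sum (f := fun y => ∑' z, if z ∈ A then 0 else P z y)
          (fun _ _ => zero_le) hbA
    _ = outflow P A := (hbal.outflow_eq_outflow_swap hP A).symm
    _ ≤ outflow Q B := by
        refine (Finset.sum_le_sum fun y hy => ENNReal.tsum_le_tsum fun z => ?_).trans
          (Finset.sum_le_sum_of_subset (Finset.filter_subset _ _))
        by_cases hzA : z ∈ A
        · simp [hzA]
        by_cases hzB : z ∈ B
        · have hyz : P y z = 0 := by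
            by_contra hyz
            exact hzA (Finset.mem_filter.2 ⟨hzB, (Finset.mem_filter.1 hy).2.tail hyz⟩)
          simp [hzA, hyz]
        · simpa [hzA, hzB] using hPQ y z

theorem IsBalanced.reflTransGen_of_hasZeroFluxAtInfinity {P Q : V → V → ℝ≥0∞}
    (hbal : IsBalanced P) (hP : ∀ u v, P u v ≠ ∞) (hPQ : P ≤ Q) (hQ : HasZeroFluxAtInfinity Q)
    {a b : V} (hab : P a b ≠ 0) : Relation.ReflTransGen (fun u v => P u v ≠ 0) b a := by
  by_contra hnr
  obtain ⟨Vn, hmono, hcover, hflux⟩ := hQ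
  obtain ⟨n₀, hb⟩ := hcover b
  refine hab (nonpos_iff_eq_zero.1 (ge_of_tendsto hflux ?_))
  filter_upwards [eventually_ge_atTop n₀] with n hn
  exact hbal.le_outflow_of_not_reflTransGen hP hPQ (hmono hn hb) hnr

end Flows

section CycleFlows

variable {V : Type*} [DecidableEq V] {E : V → V → Prop}

abbrev SACycle (E : V → V → Prop) := {l : List V // IsSACycle E l}

noncomputable def cycleFlow (w : SACycle E → ℝ≥0∞) (y z : V) : ℝ≥0∞ :=
  ∑' c : SACycle E, if (y, z) ∈ cycleEdges c.1 then w c else 0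

theorem isBalanced_cycleFlow (w : SACycle E → ℝ≥0∞) : IsBalanced (cycleFlow w) := fun y => by
  unfold cycleFlow
  rw [ENNReal.tsum_comm,
    ENNReal.tsum_comm (f := fun x c => if (x, y) ∈ cycleEdges c.1 then w c else 0)]
  exact tsum_congr fun c => (tsum_ite_mem_cycleEdges_left c.2.2.1 y (w c)).trans
    (tsum_ite_mem_cycleEdges_right c.2.2.1 y (w c)).symm

theorem le_cycleFlow (w : SACycle E → ℝ≥0∞) {c : SACycle E} {e : V × V}
    (he : e ∈ cycleEdges c.1) : w c ≤ cycleFlow w e.1 e.2 :=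
  calc w c = if e ∈ cycleEdges c.1 then w c else 0 := (if_pos he).symm
    _ ≤ cycleFlow w e.1 e.2 := ENNReal.le_tsum c

theorem cycleFlow_iSup {ι : Type*} {w : ι → SACycle E → ℝ≥0∞} (hw : Directed (· ≤ ·) w)
    (y z : V) : cycleFlow (⨆ i, w i) y z = ⨆ i, cycleFlow (w i) y z := by
  unfold cycleFlow
  rw [← ENNReal.tsum_iSup_of_directed]
  · refine tsum_congr fun c => ?_
    split_ifs <;> simp
  · intro i j
    obtain ⟨k, hik, hjk⟩ := hw i j
    refine ⟨k, fun c => ?_, fun c => ?_⟩ <;> dsimp only <;> split_ifs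
    exacts [hik c, le_rfl, hjk c, le_rfl]

theorem cycleFlow_add_single (w : SACycle E → ℝ≥0∞) (C : SACycle E) (δ : ℝ≥0∞) (y z : V) :
    cycleFlow (w + Pi.single C δ) y z =
      cycleFlow w y z + if (y, z) ∈ cycleEdges C.1 then δ else 0 := by
  unfold cycleFlow
  simp_rw [Pi.add_apply, ite_add_zero]
  rw [ENNReal.tsum_add, tsum_eq_single (f := fun c => if (y, z) ∈ cycleEdges c.1 then
    Pi.single C δ c else 0) C fun c hc => by simp [Pi.single_eq_of_ne hc]]
  simp

theorem exists_maximal_cycleFlow_le (Q : V → V → ℝ≥0∞) :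
    ∃ w : SACycle E → ℝ≥0∞, Maximal (fun w => cycleFlow w ≤ Q) w := by
  refine zorn_le₀ _ fun ws hws hchain =>
    ⟨⨆ w : ws, w.1, fun y z => ?_, fun w hw => le_iSup_of_le ⟨w, hw⟩ le_rfl⟩
  rw [cycleFlow_iSup hchain.directedOn.directed_val]
  exact iSup_le fun w => hws w.2 y z

variable {Q : V → V → ℝ≥0∞}

theorem cycleFlow_eq_of_maximal (hE : ∀ u v, Q u v ≠ 0 → E u v) (hrow : ∀ y, ∑' z, Q y z ≠ ∞)
    (hbal : IsBalanced Q) (hQ : HasZeroFluxAtInfinity Q) {w : SACycle E → ℝ≥0∞}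
    (hw : Maximal (fun w => cycleFlow w ≤ Q) w) : cycleFlow w = Q := by
  set R := Q - cycleFlow w
  have hRQ : R ≤ Q := fun u v => tsub_le_self
  have hQfin : ∀ u v, Q u v ≠ ∞ := fun u => ENNReal.ne_top_of_tsum_ne_top (hrow u)
  by_contra hne
  obtain ⟨a, b, hab⟩ : ∃ a b, R a b ≠ 0 := by
    by_contra! h
    exact hne (le_antisymm hw.prop fun u v => tsub_eq_zero_iff_le.1 (h u v))
  have hRbal : IsBalanced R := hbal.tsub (isBalanced_cycleFlow w) hw.prop hrow
  have hreach := hRbal.reflTransGen_of_hasZeroFluxAtInfinity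
    (fun u v => ne_top_of_le_ne_top (hQfin u v) (hRQ u v)) hRQ hQ hab
  obtain ⟨l, hl, habl⟩ := exists_isSACycle_of_reflTransGen (r := fun u v => R u v ≠ 0) hab hreach
  let C : SACycle E := ⟨l, hl.mono fun u v h => hE u v (ne_bot_of_le_ne_bot h (hRQ u v))⟩
  obtain ⟨e₀, he₀, hmin⟩ := (cycleEdges l).toFinset.exists_min_image (fun e => R e.1 e.2)
    ⟨(a, b), List.mem_toFinset.2 habl⟩
  have hδ : R e₀.1 e₀.2 ≠ 0 := hl.2.2 e₀ (List.mem_toFinset.1 he₀)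
  have hle : cycleFlow (w + Pi.single C (R e₀.1 e₀.2)) ≤ Q := fun y z => by
    rw [cycleFlow_add_single]
    split_ifs with hyz
    · calc cycleFlow w y z + R e₀.1 e₀.2 ≤ cycleFlow w y z + R y z :=
            add_le_add_right (hmin (y, z) (List.mem_toFinset.2 hyz)) _
        _ = Q y z := add_tsub_cancel_of_le (hw.prop y z)
    · simpa using hw.prop y z
  have hwC : w C ≠ ∞ :=
    ne_top_of_le_ne_top (hQfin a b) ((le_cycleFlow w habl).trans (hw.prop a b))
  have hgrow := hw.2 hle le_self_add C
  simp only [Pi.add_apply, Pi.single_eq_same] at hgrow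
  exact (ENNReal.lt_add_right hwC hδ).not_ge hgrow

theorem exists_cycleFlow_eq (hE : ∀ u v, Q u v ≠ 0 → E u v) (hrow : ∀ y, ∑' z, Q y z ≠ ∞)
    (hbal : IsBalanced Q) (hQ : HasZeroFluxAtInfinity Q) :
    ∃ w : SACycle E → ℝ≥0∞, cycleFlow w = Q :=
  let ⟨w, hw⟩ := exists_maximal_cycleFlow_le Q
  ⟨w, cycleFlow_eq_of_maximal hE hrow hbal hQ hw⟩

end CycleFlows

theorem outflow_ofReal {V : Type*} [DecidableEq V] {Q : V → V → ℝ} (hnonneg : ∀ y z, 0 ≤ Q y z)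
    (hrow : ∀ y, Summable (Q y)) (A : Finset V) :
    outflow (fun y z => ENNReal.ofReal (Q y z)) A =
      ENNReal.ofReal (∑ y ∈ A, ∑' z, if z ∈ A then 0 else Q y z) := by
  have hcut : ∀ y z, 0 ≤ if z ∈ A then 0 else Q y z := fun y z => by
    split_ifs; exacts [le_rfl, hnonneg y z]
  rw [ENNReal.ofReal_sum_of_nonneg fun y _ => tsum_nonneg (hcut y)]
  refine Finset.sum_congr rfl fun y _ => ?_
  rw [ENNReal.ofReal_tsum_of_nonneg (hcut y)
    ((hrow y).of_nonneg_of_le (hcut y) fun z => by split_ifs; exacts [hnonneg y z, le_rfl])]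
  exact tsum_congr fun z => by split_ifs <;> simp

theorem stmt6_general {V : Type*} [DecidableEq V] (E : V → V → Prop)
    (Q : V → V → ℝ)
    (hnonneg : ∀ y z, 0 ≤ Q y z)
    (hzero : ∀ y z, ¬ E y z → Q y z = 0)
    (hrow : ∀ y, Summable (Q y))
    (hcol : ∀ y, Summable (fun z => Q z y))
    (hdiv : ∀ y, ∑' z, Q y z = ∑' z, Q z y)
    (Vn : ℕ → Finset V)
    (hmono : Monotone Vn)
    (hcover : ∀ x : V, ∃ n, x ∈ Vn n)
    (hflux : Filter.Tendsto
      (fun n => ∑ y ∈ Vn n, ∑' z, (if z ∈ Vn n then 0 else Q y z))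
      Filter.atTop (nhds 0)) :
    ∃ w : {l : List V // IsSACycle E l} → ℝ,
      (∀ c, 0 ≤ w c) ∧
      ∀ y z, E y z →
        HasSum
          (fun c : {l : List V // IsSACycle E l} =>
            if (y, z) ∈ (c : List V).zip ((c : List V).rotate 1) then w c else 0)
          (Q y z) := by
  have hrowE : ∀ y, ∑' z, ENNReal.ofReal (Q y z) = ENNReal.ofReal (∑' z, Q y z) := fun y =>
    (ENNReal.ofReal_tsum_of_nonneg (hnonneg y) (hrow y)).symm
  have hcolE : ∀ y, ∑' z, ENNReal.ofReal (Q z y) = ENNReal.ofReal (∑' z, Q z y) := fun y =>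
    (ENNReal.ofReal_tsum_of_nonneg (fun z => hnonneg z y) (hcol y)).symm
  obtain ⟨w, hw⟩ := exists_cycleFlow_eq (E := E) (Q := fun y z => ENNReal.ofReal (Q y z))
    (fun y z h => by_contra fun hyz => h (by simp [hzero y z hyz]))
    (fun y => hrowE y ▸ ENNReal.ofReal_ne_top) (fun y => by rw [hrowE, hcolE, hdiv])
    ⟨Vn, hmono, hcover, by simpa [outflow_ofReal hnonneg hrow] using ENNReal.tendsto_ofReal hflux⟩
  refine ⟨fun c => (w c).toReal, fun c => ENNReal.toReal_nonneg, fun y z _ => ?_⟩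
  have h := ENNReal.hasSum_toReal_of_tsum_eq_ofReal (hnonneg y z) (congrFun (congrFun hw y) z)
  simp only [apply_ite ENNReal.toReal, ENNReal.toReal_zero] at h
  exact h

theorem stmt6 {V : Type*} [Countable V] [DecidableEq V] (E : V → V → Prop)
    (hloop : ∀ y, ¬ E y y)
    (Q : V → V → ℝ)
    (hnonneg : ∀ y z, 0 ≤ Q y z)
    (hzero : ∀ y z, ¬ E y z → Q y z = 0)
    (hrow : ∀ y, Summable (Q y))
    (hcol : ∀ y, Summable (fun z => Q z y))
    (hdiv : ∀ y, ∑' z, Q y z = ∑' z, Q z y)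
    (Vn : ℕ → Finset V)
    (hmono : Monotone Vn)
    (hcover : ∀ x : V, ∃ n, x ∈ Vn n)
    (hflux : Filter.Tendsto
      (fun n => ∑ y ∈ Vn n, ∑' z, (if z ∈ Vn n then 0 else Q y z))
      Filter.atTop (nhds 0)) :
    ∃ w : {l : List V // IsSACycle E l} → ℝ,
      (∀ c, 0 ≤ w c) ∧
      ∀ y z, E y z →
        HasSum
          (fun c : {l : List V // IsSACycle E l} =>
            if (y, z) ∈ (c : List V).zip ((c : List V).rotate 1) then w c else 0)
          (Q y z) :=
  stmt6_general E Q hnonneg hzero hrow hcol hdiv Vn hmono hcover hflux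
end

section
/- For the empirical measure and empirical flow of a continuous-time Markov chain on countable V, the pathwise continuity equation holds ℙ_x-almost surely: δ_y(X_T) - δ_y(X_0) + T · div Q_T(y) = 0 for every y ∈ V, where div Q_T(y) = Σ_z Q_T(y,z) - Σ_z Q_T(z,y). -/
open MeasureTheory Filter Set

/-- Number of jumps of the path `f` from `y` to `z` during the time interval `(0, T]`. -/
noncomputable def jumpsIn {V : Type*} [TopologicalSpace V] (f : ℝ → V) (y z : V) (T : ℝ) : ℕ :=
  Set.ncard {t : ℝ | 0 < t ∧ t ≤ T ∧ Function.leftLim f t = y ∧ f t = z}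

/-!
Almost surely the path `f = X · ω` is càdlàg with finitely many jumps in `(0, T]`, and the
identity becomes deterministic. A càdlàg path into a discrete space is constant between
consecutive jumps, so for any `g : V → G` the increment `g (f T) - g (f 0)` telescopes into
`∑ (g (f t) - g (f t⁻))` over the jump times. For `g = δ_y` the jump times with `f t = y` are
the jumps into `y` and those with `f t⁻ = y` the jumps out of `y`; the diagonal counts
`jumpsIn f y y T` occur on both sides.
-/

open Function Topology

section Cadlag

variable {V : Type*} [TopologicalSpace V] {f : ℝ → V}

lemma leftLim_eq_of_eqOn_Ico [T2Space V] {a b : ℝ} (hab : a < b) {c : V}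
    (h : EqOn f (fun _ ↦ c) (Ico a b)) : leftLim f b = c :=
  leftLim_eq_of_tendsto <| tendsto_const_nhds.congr' <|
    eventuallyEq_of_mem (Ico_mem_nhdsLT hab) h.symm

variable [DiscreteTopology V]
  (hr : ∀ t, ContinuousWithinAt f (Ici t) t)
  (hl : ∀ t, Tendsto f (𝓝[<] t) (𝓝 (leftLim f t)))
include hr hl

lemma eq_of_forall_leftLim_eq {a b : ℝ} (hab : a ≤ b)
    (h : ∀ t ∈ Ioc a b, leftLim f t = f t) : f b = f a := by
  refine isPreconnected_Icc.constant (fun t ht ↦ ?_) (right_mem_Icc.2 hab) (left_mem_Icc.2 hab)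
  rcases ht.1.eq_or_lt with rfl | hat
  · exact (hr _).mono Icc_subset_Ici_self
  · refine (continuousAt_iff_continuous_left_right.2 ⟨?_, hr t⟩).continuousWithinAt
    rw [← continuousWithinAt_Iio_iff_Iic, ContinuousWithinAt, ← h t ⟨hat, ht.2⟩]
    exact hl t

lemma sum_sub_leftLim_eq {G : Type*} [AddCommGroup G] (g : V → G) {S : Finset ℝ} {a b : ℝ}
    (hab : a ≤ b) (hS : ↑S ⊆ Ioc a b) (hjump : ∀ t ∈ Ioc a b, leftLim f t ≠ f t → t ∈ S) :
    ∑ t ∈ S, (g (f t) - g (leftLim f t)) = g (f b) - g (f a) := by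
  classical
  induction S using Finset.induction_on_max generalizing b with
  | empty =>
    rw [eq_of_forall_leftLim_eq hr hl hab fun t ht ↦ not_not.1 fun h ↦ by simpa using hjump t ht h]
    simp
  | insert c S hlt ih =>
    have no_jump : ∀ t ∈ Ioc a b, t ∉ insert c S → leftLim f t = f t :=
      fun t ht hnot ↦ not_not.1 fun h ↦ hnot (hjump t ht h)
    have hc : c ∈ Ioc a b := hS (Finset.mem_insert_self c S)
    -- the last point of `S` before the jump at `c`, or `a` if there is none
    set b' := (insert a S).max' (Finset.insert_nonempty a S)
    have hle_b' : ∀ x ∈ S, x ≤ b' := fun x hx ↦ Finset.le_max' _ x (Finset.mem_insert_of_mem hx)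
    have hab' : a ≤ b' := Finset.le_max' _ a (Finset.mem_insert_self a S)
    have hb'c : b' < c := by
      rcases Finset.mem_insert.1 (Finset.max'_mem (insert a S) (Finset.insert_nonempty a S))
        with h | h
      · exact h.trans_lt hc.1
      · exact hlt _ h
    have hsum := ih hab' (fun x hx ↦ ⟨(hS (Finset.mem_insert_of_mem hx)).1, hle_b' x hx⟩)
      fun t ht h ↦ by
        have htc : t < c := ht.2.trans_lt hb'c
        simpa [htc.ne] using hjump t ⟨ht.1, htc.le.trans hc.2⟩ h
    have hleft : leftLim f c = f b' := leftLim_eq_of_eqOn_Ico hb'c fun u hu ↦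
      eq_of_forall_leftLim_eq hr hl hu.1 fun t ht ↦
        no_jump t ⟨hab'.trans_lt ht.1, ht.2.trans (hu.2.trans_le hc.2).le⟩ <| by
          simp only [Finset.mem_insert, not_or]
          exact ⟨(ht.2.trans_lt hu.2).ne, fun h ↦ (hle_b' t h).not_gt ht.1⟩
    have hright : f b = f c := eq_of_forall_leftLim_eq hr hl hc.2 fun t ht ↦
      no_jump t ⟨hc.1.trans ht.1, ht.2⟩ <| by
        simp only [Finset.mem_insert, not_or]
        exact ⟨ht.1.ne', fun h ↦ (hlt t h).not_gt ht.1⟩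
    rw [Finset.sum_insert fun h ↦ (hlt c h).false, hsum, hleft, hright]
    abel

end Cadlag

lemma tsum_ncard_setOf_and_eq {α V : Type*} (p : α → Prop) (h : α → V) (y : V)
    (hfin : {t | p t ∧ h t ≠ y}.Finite) :
    ∑' z, ({t | p t ∧ h t = z}.ncard : ℤ)
      = {t | p t ∧ h t = y}.ncard + {t | p t ∧ h t ≠ y}.ncard := by
  classical
  set F := hfin.toFinset
  have hfiber : ∀ z ≠ y, {t | p t ∧ h t = z} = ↑(F.filter (h · = z)) := by
    intro z hz
    ext t
    simp only [mem_ofPred_eq, Finset.coe_filter, F, Finite.mem_toFinset]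
    exact ⟨fun ⟨hp, ht⟩ ↦ ⟨⟨hp, ht ▸ hz⟩, ht⟩, fun ⟨⟨hp, _⟩, ht⟩ ↦ ⟨hp, ht⟩⟩
  have hy : y ∉ F.image h := by
    simp [F]
  have hsupp : ∀ z ∉ insert y (F.image h), ({t | p t ∧ h t = z}.ncard : ℤ) = 0 := by
    intro z hz
    rw [Finset.mem_insert, not_or] at hz
    rw [hfiber z hz.1, ncard_coe_finset, Finset.filter_false_of_mem]
    · simp
    · exact fun t ht htz ↦ hz.2 (htz ▸ Finset.mem_image_of_mem h ht)
  rw [tsum_eq_sum hsupp, Finset.sum_insert hy, ncard_eq_toFinset_card _ hfin,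
    Finset.card_eq_sum_card_image h, Nat.cast_sum]
  congr 1
  refine Finset.sum_congr rfl fun z hz ↦ ?_
  rw [hfiber z (ne_of_mem_of_not_mem hz hy), ncard_coe_finset]

section Jumps

variable {V : Type*} [TopologicalSpace V] [DecidableEq V] {f : ℝ → V} {T : ℝ}
  (hfin : {t | 0 < t ∧ t ≤ T ∧ leftLim f t ≠ f t}.Finite)

lemma tsum_jumpsIn_from (y : V) :
    ∑' z, (jumpsIn f y z T : ℤ)
      = jumpsIn f y y T + ∑ t ∈ hfin.toFinset, if leftLim f t = y then 1 else 0 := by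
  have hjumps : {t | (0 < t ∧ t ≤ T ∧ leftLim f t = y) ∧ f t ≠ y}
      = ↑(hfin.toFinset.filter (leftLim f · = y)) := by
    ext t
    simp only [mem_ofPred_eq, Finset.coe_filter, Finite.mem_toFinset]
    grind
  have := tsum_ncard_setOf_and_eq (fun t ↦ 0 < t ∧ t ≤ T ∧ leftLim f t = y) f y
    (hjumps ▸ Finset.finite_toSet _)
  rw [hjumps, ncard_coe_finset] at this
  rw [Finset.sum_boole]
  simpa only [jumpsIn, and_assoc] using this

lemma tsum_jumpsIn_to (y : V) :
    ∑' z, (jumpsIn f z y T : ℤ)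
      = jumpsIn f y y T + ∑ t ∈ hfin.toFinset, if f t = y then 1 else 0 := by
  have hjumps : {t | (0 < t ∧ t ≤ T ∧ f t = y) ∧ leftLim f t ≠ y}
      = ↑(hfin.toFinset.filter (f · = y)) := by
    ext t
    simp only [mem_ofPred_eq, Finset.coe_filter, Finite.mem_toFinset]
    grind
  have hswap : ∀ z, jumpsIn f z y T = {t | (0 < t ∧ t ≤ T ∧ f t = y) ∧ leftLim f t = z}.ncard :=
    fun z ↦ congrArg ncard <| ext fun t ↦ by simp only [mem_ofPred_eq]; tauto
  have := tsum_ncard_setOf_and_eq (fun t ↦ 0 < t ∧ t ≤ T ∧ f t = y) (leftLim f) y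
    (hjumps ▸ Finset.finite_toSet _)
  rw [hjumps, ncard_coe_finset] at this
  rw [Finset.sum_boole]
  simpa only [← hswap] using this

end Jumps

theorem tsum_jumpsIn_balance {V : Type*} [TopologicalSpace V] [DiscreteTopology V]
    [DecidableEq V] {f : ℝ → V} (hr : ∀ t, ContinuousWithinAt f (Ici t) t)
    (hl : ∀ t, Tendsto f (𝓝[<] t) (𝓝 (leftLim f t))) {T : ℝ} (hT : 0 ≤ T)
    (hfin : {t | 0 < t ∧ t ≤ T ∧ leftLim f t ≠ f t}.Finite) (y : V) :
    (if f T = y then (1 : ℤ) else 0) + ∑' z, (jumpsIn f y z T : ℤ)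
      = (if f 0 = y then (1 : ℤ) else 0) + ∑' z, (jumpsIn f z y T : ℤ) := by
  have htelescope := sum_sub_leftLim_eq hr hl (fun v ↦ if v = y then (1 : ℤ) else 0) hT
    (fun t ht ↦ by simp only [Finite.coe_toFinset] at ht; exact ⟨ht.1, ht.2.1⟩)
    (fun t ht h ↦ hfin.mem_toFinset.2 ⟨ht.1, ht.2, h⟩)
  rw [Finset.sum_sub_distrib] at htelescope
  rw [tsum_jumpsIn_from hfin, tsum_jumpsIn_to hfin]
  linarith

theorem stmt14_general {V : Type*} [DecidableEq V]
    [TopologicalSpace V] [DiscreteTopology V]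
    {Ω : Type*} [mΩ : MeasurableSpace Ω]
    (X : ℝ → Ω → V)
    (P : V → Measure Ω)
    (hcadlag : ∀ x, ∀ᵐ ω ∂ P x,
      (∀ t, ContinuousWithinAt (fun s => X s ω) (Set.Ici t) t) ∧
      (∀ t, Tendsto (fun s => X s ω) (nhdsWithin t (Set.Iio t))
        (nhds (Function.leftLim (fun s => X s ω) t))))
    (hnonexpl : ∀ x (T : ℝ), ∀ᵐ ω ∂ P x,
      {t : ℝ | 0 < t ∧ t ≤ T ∧ Function.leftLim (fun s => X s ω) t ≠ X t ω}.Finite)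
    (x : V) (T : ℝ) (hT : 0 < T) :
    ∀ᵐ ω ∂ P x, ∀ y : V,
      (if X T ω = y then (1:ℤ) else 0)
        + ∑' z : V, (jumpsIn (fun s => X s ω) y z T : ℤ)
      = (if X 0 ω = y then (1:ℤ) else 0)
        + ∑' z : V, (jumpsIn (fun s => X s ω) z y T : ℤ) := by
  filter_upwards [hcadlag x, hnonexpl x T] with ω ⟨hr, hl⟩ hfin
  exact tsum_jumpsIn_balance hr hl hT.le hfin

/-- Pathwise continuity equation: `ℙ_x`-a.s., for every vertex `y`,
`δ_y(X_T) − δ_y(X_0) + T·div Q_T(y) = 0`, equivalently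
`δ_y(X_T) + Σ_z (# jumps y→z) = δ_y(X_0) + Σ_z (# jumps z→y)` on `(0,T]`. -/
theorem stmt14 {V : Type*} [Countable V] [DecidableEq V]
    [TopologicalSpace V] [DiscreteTopology V]
    [MeasurableSpace V] [MeasurableSingletonClass V]
    {Ω : Type*} [mΩ : MeasurableSpace Ω]
    (X : ℝ → Ω → V)
    (P : V → Measure Ω) (hprob : ∀ x, IsProbabilityMeasure (P x))
    (hcadlag : ∀ x, ∀ᵐ ω ∂ P x,
      (∀ t, ContinuousWithinAt (fun s => X s ω) (Set.Ici t) t) ∧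
      (∀ t, Tendsto (fun s => X s ω) (nhdsWithin t (Set.Iio t))
        (nhds (Function.leftLim (fun s => X s ω) t))))
    (hnonexpl : ∀ x (T : ℝ), ∀ᵐ ω ∂ P x,
      {t : ℝ | 0 < t ∧ t ≤ T ∧ Function.leftLim (fun s => X s ω) t ≠ X t ω}.Finite)
    (x : V) (T : ℝ) (hT : 0 < T) :
    ∀ᵐ ω ∂ P x, ∀ y : V,
      (if X T ω = y then (1:ℤ) else 0)
        + ∑' z : V, (jumpsIn (fun s => X s ω) y z T : ℤ)
      = (if X 0 ω = y then (1:ℤ) else 0)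
        + ∑' z : V, (jumpsIn (fun s => X s ω) z y T : ℤ) :=
  stmt14_general (mΩ := mΩ) X P hcadlag hnonexpl x T hT
end
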